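/- In SupLinUCB-S, for each stage s ∈ [S], each round t ∈ [T], and any fixed sequence of context vectors x_t: restricted to the rounds t with t ∈ Ψ_{I_t,t}^s (the rounds added to a stage-s index set), the corresponding rewards r_{I_t,t} are independent random variables with E[r_{I_t,t}] = θ_{I_t}^T x_t. -/

import Mathlib

/-!
SupLinUCB-S: the SupLinUCB-based ex-post monotone allocation rule for single-slot
sponsored search auctions.

Parameters are collected in `SupParams`: bids `b`, learning parameter `α`, horizon
`T`, number of stages `S`, and the context sequence `x`.  The click realization
`ρ : ℕ → Fin n → Bool` tells whether agent `i`'s ad would be clicked if displayed at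
round `t`.  `supPsi P ρ t i s` is the stage-`s` index set `Ψ_{i,t}^s` of agent `i` at
the beginning of round `t` (rounds numbered `0, 1, …`; `supPsi P ρ P.T` is the final
family `Ψ_{·,T+1}^·`), `supSelect P ρ t` is the agent selected at round `t`, and
`supActive P ρ t s` is the set `Â_s` of stage `s` at round `t`.
-/

open Matrix
open scoped Classical

structure SupParams (n d : ℕ) where
  b : Fin n → ℝ
  α : ℝ
  T : ℕ
  S : ℕ
  x : ℕ → Fin d → ℝ

variable {n d : ℕ} [NeZero n]

/-- The designated (round-robin) agent of round `t`. -/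
def desig (n : ℕ) [NeZero n] (t : ℕ) : Fin n :=
  ⟨t % n, Nat.mod_lt t (NeZero.pos n)⟩

/-- `A_{i,t} = I_d + ∑_{τ ∈ Ψ_{i,t}^s} x_τ x_τᵀ` (BaseLinUCB-S). -/
noncomputable def supA (P : SupParams n d) (Ψ : Fin n → ℕ → Finset ℕ)
    (i : Fin n) (s : ℕ) : Matrix (Fin d) (Fin d) ℝ :=
  1 + ∑ τ ∈ Ψ i s, vecMulVec (P.x τ) (P.x τ)

/-- `c_{i,t} = ∑_{τ ∈ Ψ_{i,t}^s} r_{i,τ} x_τ` (BaseLinUCB-S). -/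
noncomputable def supCvec (P : SupParams n d) (ρ : ℕ → Fin n → Bool)
    (Ψ : Fin n → ℕ → Finset ℕ) (i : Fin n) (s : ℕ) : Fin d → ℝ :=
  ∑ τ ∈ Ψ i s, (if ρ τ i then (1 : ℝ) else 0) • P.x τ

/-- The width `w_{i,t}^s = α √(x_tᵀ A_{i,t}⁻¹ x_t)`. -/
noncomputable def wIn (P : SupParams n d) (Ψ : Fin n → ℕ → Finset ℕ)
    (t : ℕ) (i : Fin n) (s : ℕ) : ℝ :=
  P.α * Real.sqrt (P.x t ⬝ᵥ ((supA P Ψ i s)⁻¹ *ᵥ P.x t))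

/-- The estimate `r̂_{i,t}^s = θ_{i,t}ᵀ x_t` with `θ_{i,t} = A_{i,t}⁻¹ c_{i,t}`. -/
noncomputable def rhatIn (P : SupParams n d) (ρ : ℕ → Fin n → Bool)
    (Ψ : Fin n → ℕ → Finset ℕ) (t : ℕ) (i : Fin n) (s : ℕ) : ℝ :=
  ((supA P Ψ i s)⁻¹ *ᵥ supCvec P ρ Ψ i s) ⬝ᵥ P.x t

/-- The score `b_i (r̂_{i,t}^s + w_{i,t}^s)`. -/
noncomputable def scoreIn (P : SupParams n d) (ρ : ℕ → Fin n → Bool)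
    (Ψ : Fin n → ℕ → Finset ℕ) (t : ℕ) (i : Fin n) (s : ℕ) : ℝ :=
  P.b i * (rhatIn P ρ Ψ t i s + wIn P Ψ t i s)

/-- The active sets `Â_s` of the inner loop of SupLinUCB-S at round `t`
(`Â_1 = N`; `Â_{s+1}` is obtained from `Â_s` by the elimination rule (iii) when the
loop advances from stage `s` to stage `s+1`, i.e. when none of the stopping rules
(i), (ii), (iv) fires at stage `s`). -/
noncomputable def actIn (P : SupParams n d) (ρ : ℕ → Fin n → Bool)
    (Ψ : Fin n → ℕ → Finset ℕ) (t : ℕ) : ℕ → Finset (Fin n)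
  | 0 => Finset.univ
  | 1 => Finset.univ
  | (s + 1) =>
    let act := actIn P ρ Ψ t s
    if (desig n t ∈ act ∧ (2 : ℝ) ^ (-(s : ℤ)) < wIn P Ψ t (desig n t) s) ∨
       (∀ i ∈ act, wIn P Ψ t i s ≤ 1 / Real.sqrt P.T) ∨
       ¬ (∀ i ∈ act, wIn P Ψ t i s ≤ (2 : ℝ) ^ (-(s : ℤ)))
    then act
    else act.filter (fun i => ∀ a ∈ act,
      scoreIn P ρ Ψ t a s - (2 : ℝ) ^ (1 - (s : ℤ)) ≤ scoreIn P ρ Ψ t i s)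

/-- Rule (i) fires at stage `s`: the designated agent `j` is in `Â_s` and
`w_{j,t}^s > 2^{-s}` (select `j` and learn). -/
def condI (P : SupParams n d) (ρ : ℕ → Fin n → Bool)
    (Ψ : Fin n → ℕ → Finset ℕ) (t s : ℕ) : Prop :=
  desig n t ∈ actIn P ρ Ψ t s ∧ (2 : ℝ) ^ (-(s : ℤ)) < wIn P Ψ t (desig n t) s

/-- Rule (ii) fires at stage `s`: `w_{i,t}^s ≤ 1/√T` for all `i ∈ Â_s`
(exploit, no update). -/
def condII (P : SupParams n d) (ρ : ℕ → Fin n → Bool)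
    (Ψ : Fin n → ℕ → Finset ℕ) (t s : ℕ) : Prop :=
  ∀ i ∈ actIn P ρ Ψ t s, wIn P Ψ t i s ≤ 1 / Real.sqrt P.T

/-- The condition of rule (iii) at stage `s`: `w_{i,t}^s ≤ 2^{-s}` for all `i ∈ Â_s`
(eliminate and advance the stage). -/
def condIII (P : SupParams n d) (ρ : ℕ → Fin n → Bool)
    (Ψ : Fin n → ℕ → Finset ℕ) (t s : ℕ) : Prop :=
  ∀ i ∈ actIn P ρ Ψ t s, wIn P Ψ t i s ≤ (2 : ℝ) ^ (-(s : ℤ))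

/-- The stage at which the inner loop of round `t` stops, i.e. the first stage
`s ∈ {1, …, S}` at which one of the rules (i), (ii), (iv) fires. -/
noncomputable def stopIn (P : SupParams n d) (ρ : ℕ → Fin n → Bool)
    (Ψ : Fin n → ℕ → Finset ℕ) (t : ℕ) : ℕ :=
  (((Finset.Icc 1 P.S).filter fun s =>
      condI P ρ Ψ t s ∨ condII P ρ Ψ t s ∨ ¬ condIII P ρ Ψ t s).min).untopD P.S

/-- The agent selected at round `t`: the designated agent if rule (i) fires at the
stopping stage, and otherwise (rules (ii)/(iv)) the agent of `Â_s` maximizing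
`b_i (r̂_{i,t}^s + w_{i,t}^s)`. -/
noncomputable def selectIn (P : SupParams n d) (ρ : ℕ → Fin n → Bool)
    (Ψ : Fin n → ℕ → Finset ℕ) (t : ℕ) : Fin n :=
  let s := stopIn P ρ Ψ t
  if condI P ρ Ψ t s then desig n t
  else
    (((actIn P ρ Ψ t s).filter fun i => ∀ a ∈ actIn P ρ Ψ t s,
        scoreIn P ρ Ψ t a s ≤ scoreIn P ρ Ψ t i s).min).untopD (desig n t)

/-- `some s` if at round `t` the algorithm learns (rule (i)) at stage `s`,
`none` if no index set is updated at round `t`. -/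
noncomputable def learnIn (P : SupParams n d) (ρ : ℕ → Fin n → Bool)
    (Ψ : Fin n → ℕ → Finset ℕ) (t : ℕ) : Option ℕ :=
  if condI P ρ Ψ t (stopIn P ρ Ψ t) then some (stopIn P ρ Ψ t) else none

/-- The index sets `Ψ_{i,t}^s` at the beginning of round `t`. -/
noncomputable def supPsi (P : SupParams n d) (ρ : ℕ → Fin n → Bool) :
    ℕ → Fin n → ℕ → Finset ℕ
  | 0 => fun _ _ => ∅
  | t + 1 =>
    let Ψ := supPsi P ρ t
    match learnIn P ρ Ψ t with
    | none => Ψ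
    | some s => fun i s' => if i = desig n t ∧ s' = s then insert t (Ψ i s') else Ψ i s'

/-- The agent `I_t` selected by SupLinUCB-S at round `t`. -/
noncomputable def supSelect (P : SupParams n d) (ρ : ℕ → Fin n → Bool) (t : ℕ) : Fin n :=
  selectIn P ρ (supPsi P ρ t) t

/-- The active set `Â_s` at round `t`. -/
noncomputable def supActive (P : SupParams n d) (ρ : ℕ → Fin n → Bool) (t s : ℕ) :
    Finset (Fin n) :=
  actIn P ρ (supPsi P ρ t) t s

/-- The width `w_{i,t}^s` at round `t`. -/
noncomputable def supWidth (P : SupParams n d) (ρ : ℕ → Fin n → Bool)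
    (t : ℕ) (i : Fin n) (s : ℕ) : ℝ :=
  wIn P (supPsi P ρ t) t i s

/-- The upper confidence bound `ucb_{i,t}^s = r̂_{i,t}^s + w_{i,t}^s` at round `t`. -/
noncomputable def supUcb (P : SupParams n d) (ρ : ℕ → Fin n → Bool)
    (t : ℕ) (i : Fin n) (s : ℕ) : ℝ :=
  rhatIn P ρ (supPsi P ρ t) t i s + wIn P (supPsi P ρ t) t i s

/-- The stage at which the inner loop of round `t` stops. -/
noncomputable def supStop (P : SupParams n d) (ρ : ℕ → Fin n → Bool) (t : ℕ) : ℕ :=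
  stopIn P ρ (supPsi P ρ t) t

/-- Rule (i) fires at round `t`, stage `s`. -/
def supCondI (P : SupParams n d) (ρ : ℕ → Fin n → Bool) (t s : ℕ) : Prop :=
  condI P ρ (supPsi P ρ t) t s

/-- Rule (ii) fires at round `t`, stage `s`. -/
def supCondII (P : SupParams n d) (ρ : ℕ → Fin n → Bool) (t s : ℕ) : Prop :=
  condII P ρ (supPsi P ρ t) t s

/-- `ν_i(b, t)`: the number of clicks received by agent `i` in the first `t` rounds. -/
noncomputable def supClicks (P : SupParams n d) (ρ : ℕ → Fin n → Bool)
    (i : Fin n) (t : ℕ) : ℕ :=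
  ((Finset.range t).filter (fun u => supSelect P ρ u = i ∧ ρ u i = true)).card

/-- The agent with the highest expected valuation for the context of round `t`:
`i*_t = argmax_i b_i (θ_iᵀ x_t)`. -/
noncomputable def supIstar (P : SupParams n d) (θ : Fin n → Fin d → ℝ) (t : ℕ) : Fin n :=
  ((Finset.univ.filter fun i : Fin n => ∀ k : Fin n,
      P.b k * (θ k ⬝ᵥ P.x t) ≤ P.b i * (θ i ⬝ᵥ P.x t)).min).untopD (desig n t)

open MeasureTheory ProbabilityTheory

/-!
Whether round `t` enlarges an index set of some stage `σ ≤ s` is decided by the index sets of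
the stages `≤ σ` and by the clicks recorded in the stages `< σ`. By induction over the rounds,
the stage-`≤ s` index sets therefore do not depend on the clicks recorded in stage `s`, so the
event `A` is determined by the clicks outside `{(t, g t) : t ∈ E}` (of rounds `< T`). These are
independent of the clicks `(click · t (g t))_{t ∈ E}`, so conditioning on `A` does not change
the joint law of the latter: they remain independent, with the unconditional means.
-/

theorem Finset.untopD_min_filter_congr {F : Finset ℕ} {p q : ℕ → Prop} [DecidablePred p]
    [DecidablePred q] {b m : ℕ} (hF : ∀ x ∈ F, x ≤ b) (hpq : ∀ x ∈ F, x ≤ m → (p x ↔ q x))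
    (hm : (F.filter p).min.untopD b ≤ m) :
    (F.filter q).min.untopD b = (F.filter p).min.untopD b := by
  by_cases hbm : b ≤ m
  · rw [Finset.filter_congr fun x hx => (hpq x hx ((hF x hx).trans hbm)).symm]
  have hne : (F.filter p).min ≠ ⊤ := fun h => by rw [h, WithTop.untopD_top] at hm; omega
  obtain ⟨k, hk⟩ := WithTop.ne_top_iff_exists.mp hne
  rw [← hk, WithTop.untopD_coe] at hm
  obtain ⟨hkF, hpk⟩ := Finset.mem_filter.mp (Finset.mem_of_min hk.symm)
  suffices (F.filter q).min = (F.filter p).min by rw [this]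
  rw [← hk]
  refine le_antisymm (Finset.min_le (Finset.mem_filter.mpr ⟨hkF, (hpq k hkF hm).mp hpk⟩)) ?_
  refine Finset.le_min fun x hx => ?_
  obtain ⟨hxF, hqx⟩ := Finset.mem_filter.mp hx
  by_contra! hxk
  have hxm : x ≤ m := (WithTop.coe_lt_coe.mp hxk).le.trans hm
  have := hk.symm ▸ Finset.min_le (Finset.mem_filter.mpr ⟨hxF, (hpq x hxF hxm).mpr hqx⟩)
  exact absurd this (not_le.mpr hxk)

namespace ProbabilityTheory

variable {Ω Ω' α β ι : Type*} {mΩ : MeasurableSpace Ω} {mΩ' : MeasurableSpace Ω'}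
  {mα : MeasurableSpace α} {mβ : MeasurableSpace β}

theorem iIndepFun_of_identDistrib_pi [Fintype ι] {κ : ι → Type*}
    {mκ : ∀ i, MeasurableSpace (κ i)} {μ : Measure Ω} {μ' : Measure Ω'}
    [IsProbabilityMeasure μ] [IsProbabilityMeasure μ'] {X : ∀ i, Ω → κ i} {X' : ∀ i, Ω' → κ i}
    (h_indep : iIndepFun X μ)
    (h_ident : IdentDistrib (fun ω i => X i ω) (fun ω i => X' i ω) μ μ') :
    iIndepFun X' μ' := by
  have h_coord : ∀ i, IdentDistrib (X i) (X' i) μ μ' := fun i =>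
    h_ident.comp (measurable_pi_apply i)
  rw [iIndepFun_iff_map_fun_eq_pi_map fun i => (h_coord i).aemeasurable_snd, ← h_ident.map_eq,
    (iIndepFun_iff_map_fun_eq_pi_map fun i => (h_coord i).aemeasurable_fst).mp h_indep]
  exact congrArg Measure.pi (funext fun i => (h_coord i).map_eq)

theorem IndepFun.identDistrib_cond {μ : Measure Ω} [IsFiniteMeasure μ] {X : Ω → α} {Y : Ω → β}
    (h : IndepFun X Y μ) (hX : Measurable X) (hY : Measurable Y) {A : Set Ω}
    (hA : MeasurableSet[mβ.comap Y] A) (hA0 : μ A ≠ 0) :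
    IdentDistrib X X μ[|A] μ := by
  obtain ⟨B, hB, rfl⟩ := hA
  refine ⟨hX.aemeasurable, hX.aemeasurable, Measure.ext fun C hC => ?_⟩
  rw [Measure.map_apply hX hC, Measure.map_apply hX hC, cond_apply (hY hB), Set.inter_comm,
    h.measure_inter_preimage_eq_mul C B hC hB, mul_comm,
    ENNReal.mul_inv_cancel_right hA0 (measure_ne_top μ _)]

theorem measurableSet_comap_of_forall_eq {Y : Ω → β} [Countable β] [MeasurableSingletonClass β]
    {A : Set Ω} (hA : ∀ ω ω', Y ω = Y ω' → ω ∈ A → ω' ∈ A) : MeasurableSet[mβ.comap Y] A :=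
  ⟨Y '' A, (Set.to_countable _).measurableSet,
    (Set.subset_preimage_image Y A).antisymm' fun ω ⟨ω', hω', hY⟩ => hA ω' ω hY hω'⟩

theorem integral_ite_bool {μ : Measure Ω} {b : Ω → Bool} (hb : Measurable b) :
    ∫ ω, (if b ω then (1 : ℝ) else 0) ∂μ = μ.real {ω | b ω = true} := by
  rw [← integral_indicator_one (s := {ω | b ω = true}) (hb (measurableSet_singleton true))]
  congr 1 with ω
  by_cases h : b ω <;> simp [h]

end ProbabilityTheory

theorem wIn_congr {m : ℕ} (P : SupParams m d) {Ψ Ψ' : Fin m → ℕ → Finset ℕ} {t : ℕ}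
    {i : Fin m} {σ : ℕ} (h : Ψ i σ = Ψ' i σ) : wIn P Ψ t i σ = wIn P Ψ' t i σ := by
  simp only [wIn, supA, h]

theorem scoreIn_congr {m : ℕ} (P : SupParams m d) {c c' : ℕ → Fin m → Bool}
    {Ψ Ψ' : Fin m → ℕ → Finset ℕ} {t : ℕ} {i : Fin m} {σ : ℕ} (h : Ψ i σ = Ψ' i σ)
    (hc : ∀ τ ∈ Ψ i σ, c τ i = c' τ i) : scoreIn P c Ψ t i σ = scoreIn P c' Ψ' t i σ := by
  have hcvec : supCvec P c Ψ i σ = supCvec P c' Ψ' i σ := by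
    rw [supCvec, supCvec, ← h]
    exact Finset.sum_congr rfl fun τ hτ => by rw [hc τ hτ]
  simp only [scoreIn, rhatIn, hcvec, wIn_congr P h, supA, h]

def loopStopsAt (P : SupParams n d) (c : ℕ → Fin n → Bool) (Ψ : Fin n → ℕ → Finset ℕ)
    (t σ : ℕ) : Prop :=
  condI P c Ψ t σ ∨ condII P c Ψ t σ ∨ ¬ condIII P c Ψ t σ

section StageCongruence

variable (P : SupParams n d) {c c' : ℕ → Fin n → Bool} {Ψ Ψ' : Fin n → ℕ → Finset ℕ}
  {t s : ℕ}

theorem actIn_congr (hΨ : ∀ i σ, σ ≤ s → Ψ i σ = Ψ' i σ)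
    (hc : ∀ i σ, σ < s → ∀ τ ∈ Ψ i σ, c τ i = c' τ i) :
    ∀ σ ≤ s, actIn P c Ψ t σ = actIn P c' Ψ' t σ
  | 0, _ => by rw [actIn, actIn]
  | 1, _ => by rw [actIn, actIn]
  | σ + 2, hσ => by
    have hact := actIn_congr hΨ hc (σ + 1) (by omega)
    have hw : ∀ i, wIn P Ψ t i (σ + 1) = wIn P Ψ' t i (σ + 1) :=
      fun i => wIn_congr P (hΨ i _ (by omega))
    have hscore : ∀ i, scoreIn P c Ψ t i (σ + 1) = scoreIn P c' Ψ' t i (σ + 1) :=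
      fun i => scoreIn_congr P (hΨ i _ (by omega)) (hc i _ (by omega))
    rw [actIn.eq_3 P c Ψ t (σ + 1) (by omega), actIn.eq_3 P c' Ψ' t (σ + 1) (by omega), hact]
    simp only [hw, hscore]

theorem learnIn_eq_some_iff {σ : ℕ} :
    learnIn P c Ψ t = some σ ↔ stopIn P c Ψ t = σ ∧ condI P c Ψ t σ := by
  unfold learnIn
  split_ifs with h <;> grind

theorem stopIn_congr (h : ∀ σ ≤ s, loopStopsAt P c Ψ t σ ↔ loopStopsAt P c' Ψ' t σ)
    (hs : stopIn P c Ψ t ≤ s) : stopIn P c' Ψ' t = stopIn P c Ψ t :=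
  Finset.untopD_min_filter_congr (fun _ hx => (Finset.mem_Icc.mp hx).2) (fun σ _ hσ => h σ hσ) hs

theorem learnIn_eq_some_congr (hΨ : ∀ i σ, σ ≤ s → Ψ i σ = Ψ' i σ)
    (hc : ∀ i σ, σ < s → ∀ τ ∈ Ψ i σ, c τ i = c' τ i) {σ : ℕ} (hσ : σ ≤ s) :
    learnIn P c Ψ t = some σ ↔ learnIn P c' Ψ' t = some σ := by
  have hact := actIn_congr P (t := t) hΨ hc
  have hI : ∀ σ ≤ s, condI P c Ψ t σ ↔ condI P c' Ψ' t σ := fun σ hσ => by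
    simp only [condI, hact σ hσ, wIn_congr P (hΨ _ σ hσ)]
  have hstops : ∀ σ ≤ s, loopStopsAt P c Ψ t σ ↔ loopStopsAt P c' Ψ' t σ := fun σ hσ => by
    have hw : ∀ i, wIn P Ψ t i σ = wIn P Ψ' t i σ := fun i => wIn_congr P (hΨ i σ hσ)
    simp only [loopStopsAt, hI σ hσ, condII, condIII, hact σ hσ, hw]
  rw [learnIn_eq_some_iff, learnIn_eq_some_iff]
  constructor
  · rintro ⟨hstop, hcond⟩
    exact ⟨(stopIn_congr P hstops (hstop ▸ hσ)).trans hstop, (hI σ hσ).mp hcond⟩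
  · rintro ⟨hstop, hcond⟩
    exact ⟨(stopIn_congr P (fun σ hσ => (hstops σ hσ).symm) (hstop ▸ hσ)).trans hstop,
      (hI σ hσ).mpr hcond⟩

end StageCongruence

/-- The stage at which round `t` enlarges an index set (rule (i)), if any. -/
noncomputable def supLearn (P : SupParams n d) (c : ℕ → Fin n → Bool) (t : ℕ) : Option ℕ :=
  learnIn P c (supPsi P c t) t

section IndexSets

variable (P : SupParams n d) {c c' : ℕ → Fin n → Bool}

theorem mem_supPsi_iff {τ t σ : ℕ} {i : Fin n} :
    τ ∈ supPsi P c t i σ ↔ τ < t ∧ supLearn P c τ = some σ ∧ i = desig n τ := by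
  induction t with
  | zero => simp [supPsi]
  | succ t ih =>
    rw [supPsi, Nat.lt_succ_iff_lt_or_eq]
    rcases hL : learnIn P c (supPsi P c t) t with _ | s <;>
      simp only [ih] <;> grind [supLearn]

theorem supSelect_eq_desig {t σ : ℕ} (h : supLearn P c t = some σ) :
    supSelect P c t = desig n t := by
  have hI : condI P c (supPsi P c t) t (stopIn P c (supPsi P c t) t) :=
    ((learnIn_eq_some_iff P).mp h).1 ▸ ((learnIn_eq_some_iff P).mp h).2
  simp only [supSelect, selectIn, if_pos hI]

theorem supSelect_eq_and_mem_supPsi_iff {t u σ : ℕ} {i : Fin n} :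
    supSelect P c t = i ∧ t ∈ supPsi P c u i σ ↔ t ∈ supPsi P c u i σ := by
  refine ⟨And.right, fun h => ⟨?_, h⟩⟩
  obtain ⟨-, hlearn, rfl⟩ := (mem_supPsi_iff P).mp h
  exact supSelect_eq_desig P hlearn

theorem supLearn_congr {s : ℕ} :
    ∀ v, (∀ τ < v, ∀ j, c τ j ≠ c' τ j → supLearn P c τ = some s) →
      ∀ σ ≤ s, supLearn P c v = some σ ↔ supLearn P c' v = some σ := by
  intro v
  induction v using Nat.strong_induction_on with
  | _ v ih =>
  intro hdiff σ hσ
  have hΨ : ∀ i σ, σ ≤ s → supPsi P c v i σ = supPsi P c' v i σ := fun i σ hσ => by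
    ext τ
    simp only [mem_supPsi_iff]
    exact and_congr_right fun hτ =>
      and_congr_left fun _ => ih τ hτ (fun τ' hτ' => hdiff τ' (hτ'.trans hτ)) σ hσ
  have hc : ∀ i σ, σ < s → ∀ τ ∈ supPsi P c v i σ, c τ i = c' τ i := by
    intro i σ hσ τ hτ
    obtain ⟨hτv, hlearn, -⟩ := (mem_supPsi_iff P).mp hτ
    by_contra hne
    have := Option.some_inj.mp (hlearn.symm.trans (hdiff τ hτv i hne))
    omega
  exact learnIn_eq_some_congr P hΨ hc hσ

end IndexSets

theorem forall_mem_supPsi_congr (P : SupParams n d) {c c' : ℕ → Fin n → Bool} {u s : ℕ}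
    {E : Finset ℕ} {g : ℕ → Fin n} (h : ∀ t ∈ E, t ∈ supPsi P c u (g t) s)
    (hagree : ∀ τ < u, ∀ j, (τ, j) ∉ E.image (fun t => (t, g t)) → c τ j = c' τ j) :
    ∀ t ∈ E, t ∈ supPsi P c' u (g t) s := by
  intro t ht
  obtain ⟨htu, hlearn, hg⟩ := (mem_supPsi_iff P).mp (h t ht)
  refine (mem_supPsi_iff P).mpr ⟨htu, (supLearn_congr P t ?_ s le_rfl).mp hlearn, hg⟩
  intro τ hτ j hne
  obtain ⟨τ', hτ'E, hτ'⟩ :=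
    Finset.mem_image.mp (not_imp_comm.mp (hagree τ (hτ.trans htu) j) hne)
  obtain ⟨rfl, rfl⟩ := Prod.mk.inj hτ'
  exact ((mem_supPsi_iff P).mp (h τ' hτ'E)).2.1

theorem suplinucb_s_rewards_conditionally_independent_general
    {n d : ℕ} [NeZero n] (P : SupParams n d) (θ : Fin n → Fin d → ℝ)
    {Ω : Type*} [MeasurableSpace Ω] (Pr : Measure Ω) [IsProbabilityMeasure Pr]
    (click : Ω → ℕ → Fin n → Bool)
    (hmeas : ∀ t i, Measurable fun ω => click ω t i)
    (hind : iIndepFun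
      (fun (p : ℕ × Fin n) ω => click ω p.1 p.2) Pr)
    (hmean : ∀ t i, (Pr {ω | click ω t i = true}).toReal = θ i ⬝ᵥ P.x t)
    (s : ℕ)
    (E : Finset ℕ) (g : ℕ → Fin n)
    (A : Set Ω)
    (hA : A = {ω | ∀ t ∈ E,
      supSelect P (click ω) t = g t ∧ t ∈ supPsi P (click ω) P.T (g t) s})
    (hpos : Pr A ≠ 0) :
    iIndepFun
        (fun (t : E) (ω : Ω) => (if click ω t (g t) then (1 : ℝ) else 0))
        (ProbabilityTheory.cond Pr A) ∧
      ∀ t ∈ E,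
        ∫ ω, (if click ω t (g t) then (1 : ℝ) else 0) ∂(ProbabilityTheory.cond Pr A) =
          θ (g t) ⬝ᵥ P.x t := by
  simp_rw [supSelect_eq_and_mem_supPsi_iff] at hA
  let D := E.image fun t => (t, g t)
  let D' := (Finset.range P.T ×ˢ Finset.univ) \ D
  let Z : Ω → E → Bool := fun ω t => click ω t (g t)
  let Y : Ω → D' → Bool := fun ω p => click ω p.1.1 p.1.2
  have hZ : Measurable Z := measurable_pi_lambda _ fun t => hmeas _ _
  have hY : Measurable Y := measurable_pi_lambda _ fun p => hmeas _ _
  have hZY : IndepFun Z Y Pr :=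
    (hind.indepFun_finset D D' Finset.disjoint_sdiff fun p => hmeas p.1 p.2).comp
      (φ := fun v (t : E) => v ⟨(t, g t), Finset.mem_image_of_mem _ t.2⟩)
      (measurable_pi_lambda _ fun _ => measurable_pi_apply _) measurable_id
  have hAY : MeasurableSet[.comap Y inferInstance] A :=
    measurableSet_comap_of_forall_eq fun ω ω' hYω hω => by
      rw [hA] at hω ⊢
      exact forall_mem_supPsi_congr P hω fun τ hτ j hD =>
        congrFun hYω ⟨(τ, j), Finset.mem_sdiff.mpr ⟨by simpa using hτ, hD⟩⟩
  have hlaw : IdentDistrib Z Z Pr[|A] Pr := hZY.identDistrib_cond hZ hY hAY hpos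
  have := cond_isProbabilityMeasure hpos
  refine ⟨?_, fun t ht => ?_⟩
  · have hclicks : iIndepFun (fun (t : E) ω => click ω t (g t)) Pr :=
      hind.precomp (g := fun (t : E) => ((t : ℕ), g t)) fun t t' h =>
        Subtype.ext (congrArg Prod.fst h)
    exact (iIndepFun_of_identDistrib_pi hclicks hlaw.symm).comp
      (fun _ b => if b then (1 : ℝ) else 0) fun _ => measurable_of_finite _
  · calc _ = ∫ ω, (if click ω t (g t) then (1 : ℝ) else 0) ∂Pr :=
          (hlaw.comp (u := fun z => if z ⟨t, ht⟩ then (1 : ℝ) else 0)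
            (measurable_of_finite _)).integral_eq
      _ = _ := by rw [integral_ite_bool (hmeas t (g t)), measureReal_def, hmean]

/-- **Lemma 3 (after Chu et al., Lemma 4).** In SupLinUCB-S, for each stage
`s ∈ {1, …, S}` and any fixed sequence of context vectors: restricted to the rounds
`t` with `t ∈ Ψ_{I_t,t}^s` (the rounds added to a stage-`s` index set), the
corresponding rewards `r_{I_t,t}` are independent random variables with
`E[r_{I_t,t}] = θ_{I_t}ᵀ x_t`.

Formalization: the clicks `click · t i` are independent Bernoulli random variables
with means `θ_iᵀ x_t`; for any finite set `E` of rounds and any assignment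
`g : ℕ → Fin n` of agents, conditionally on the event `A` that for every `t ∈ E`
the algorithm selected `I_t = g t` and added `t` to the stage-`s` index set of
`g t`, the rewards `(r_{g t, t})_{t ∈ E}` are independent with conditional
expectation `θ_{g t}ᵀ x_t`. -/
theorem suplinucb_s_rewards_conditionally_independent
    {n d : ℕ} [NeZero n] (P : SupParams n d) (θ : Fin n → Fin d → ℝ)
    {Ω : Type*} [MeasurableSpace Ω] (Pr : Measure Ω) [IsProbabilityMeasure Pr]
    (click : Ω → ℕ → Fin n → Bool)
    (hmeas : ∀ t i, Measurable fun ω => click ω t i)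
    (hind : iIndepFun
      (fun (p : ℕ × Fin n) ω => click ω p.1 p.2) Pr)
    (hmean : ∀ t i, (Pr {ω | click ω t i = true}).toReal = θ i ⬝ᵥ P.x t)
    (hθx : ∀ i t, θ i ⬝ᵥ P.x t ∈ Set.Icc (0 : ℝ) 1)
    (s : ℕ) (hs : s ∈ Finset.Icc 1 P.S)
    (E : Finset ℕ) (hE : ∀ t ∈ E, t < P.T) (g : ℕ → Fin n)
    (A : Set Ω)
    (hA : A = {ω | ∀ t ∈ E,
      supSelect P (click ω) t = g t ∧ t ∈ supPsi P (click ω) P.T (g t) s})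
    (hpos : Pr A ≠ 0) :
    iIndepFun
        (fun (t : E) (ω : Ω) => (if click ω t (g t) then (1 : ℝ) else 0))
        (ProbabilityTheory.cond Pr A) ∧
      ∀ t ∈ E,
        ∫ ω, (if click ω t (g t) then (1 : ℝ) else 0) ∂(ProbabilityTheory.cond Pr A) =
          θ (g t) ⬝ᵥ P.x t :=
  suplinucb_s_rewards_conditionally_independent_general P θ Pr click hmeas hind hmean s E g A hA
    hpos
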